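/- For all real numbers x, y ≥ 0 with x, y > 0 (or by continuity, for all x, y ≥ 0 interpreting the logarithmic term as 0 when x = 0 or y = 0), one has 2·x·y·(x−y)·log(x/y) ≤ (x−y)²·(x+y). -/

import Mathlib

private lemma log_ineq_aux (x y : ℝ) (hy : 0 < y) (hxy : y ≤ x) :
    2 * x * y * (x - y) * Real.log (x / y) ≤ (x - y) ^ 2 * (x + y) := by
  have hx : 0 < x := hy.trans_le hxy
  have ht : (1:ℝ) ≤ x / y := (one_le_div hy).2 hxy
  have hlog : 0 ≤ Real.log (x / y) := Real.log_nonneg ht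
  have hsinh : Real.log (x / y) ≤ (x / y - (x / y)⁻¹) / 2 := by
    have := Real.self_le_sinh_iff.2 hlog
    rwa [Real.sinh_log (by positivity)] at this
  have key : Real.log (x / y) ≤ (x ^ 2 - y ^ 2) / (2 * x * y) := by
    refine hsinh.trans (le_of_eq ?_)
    field_simp
  have h1 : 0 ≤ 2 * x * y * (x - y) := by
    have : 0 ≤ x - y := sub_nonneg.2 hxy
    positivity
  calc 2 * x * y * (x - y) * Real.log (x / y)
      ≤ 2 * x * y * (x - y) * ((x ^ 2 - y ^ 2) / (2 * x * y)) :=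
        mul_le_mul_of_nonneg_left key h1
    _ = (x - y) ^ 2 * (x + y) := by field_simp; ring

/-- Lemma 4.2: for all `x, y ≥ 0`, `2xy(x−y)log(x/y) ≤ (x−y)²(x+y)`
    (with `log(x/y)` interpreted as `0` when `x = 0` or `y = 0`,
    which is automatic in Lean since `x/0 = 0` and `Real.log 0 = 0`). -/
theorem log_ineq_two_xy (x y : ℝ) (hx : 0 ≤ x) (hy : 0 ≤ y) :
    2 * x * y * (x - y) * Real.log (x / y) ≤ (x - y) ^ 2 * (x + y) := by
  rcases eq_or_lt_of_le hx with hx0 | hx0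
  · simp [← hx0]; positivity
  rcases eq_or_lt_of_le hy with hy0 | hy0
  · simp [← hy0]; positivity
  rcases le_total y x with h | h
  · exact log_ineq_aux x y hy0 h
  · have := log_ineq_aux y x hx0 h
    have hlog : Real.log (x / y) = -Real.log (y / x) := by
      rw [← Real.log_inv, inv_div]
    rw [hlog]
    calc 2 * x * y * (x - y) * -Real.log (y / x)
        = 2 * y * x * (y - x) * Real.log (y / x) := by ring
      _ ≤ (y - x) ^ 2 * (y + x) := this
      _ = (x - y) ^ 2 * (x + y) := by ring
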